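/- Let t ∈ ℂ be such that t ≠ 0 and t ≠ f₂(0, y) for every y ∈ ℂ. Then the map g restricts to a bijection from the fibre f₂⁻¹(t) = {(x,y) ∈ ℂ² : f₂(x,y) = t} onto ℂ ∖ ({0} ∪ {β₁, …, β_{r−1}}). (The target is independent of t, so all such fibres of f₂ are identified with the same r-punctured plane; in particular f₂ is a rational polynomial and is isotrivial.) -/
import Mathlib


/-- `s(x,y) = y·x^k + P(x)`. -/
noncomputable def sFun (k : ℕ) (P : Polynomial ℂ) (v : ℂ × ℂ) : ℂ :=
  v.2 * v.1 ^ k + P.eval v.1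

/-- `g(x,y) = x^{q₁}·s(x,y)^q`. -/
noncomputable def gFun (k q q₁ : ℕ) (P : Polynomial ℂ) (v : ℂ × ℂ) : ℂ :=
  v.1 ^ q₁ * (sFun k P v) ^ q

/-- `f₂(x,y) = x^{p₁}·s(x,y)^p·∏ᵢ(βᵢ − g(x,y))^{aᵢ}` (second normal form,
the isotrivial case with a puncture at `0`). -/
noncomputable def f2Fun (k p q p₁ q₁ r : ℕ) (P : Polynomial ℂ)
    (a : Fin (r - 1) → ℕ) (β : Fin (r - 1) → ℂ) (v : ℂ × ℂ) : ℂ :=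
  v.1 ^ p₁ * (sFun k P v) ^ p * ∏ i, (β i - gFun k q q₁ P v) ^ a i

private lemma combo {z c : ℂ} (hz : z ≠ 0) (hc : c ≠ 0) (a b a' b' e f : ℤ) :
    (z ^ a * c ^ b) ^ e * (z ^ a' * c ^ b') ^ f
      = z ^ (a * e + a' * f) * c ^ (b * e + b' * f) := by
  rw [mul_zpow, mul_zpow, ← zpow_mul, ← zpow_mul, ← zpow_mul, ← zpow_mul,
    mul_mul_mul_comm, ← zpow_add₀ hz, ← zpow_add₀ hc]

private lemma uniq {x x' s s' : ℂ} (hx : x ≠ 0) (hx' : x' ≠ 0) (hs : s ≠ 0) (hs' : s' ≠ 0)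
    {p q p₁ q₁ : ℕ} {e : ℤ} (he : (p : ℤ) * q₁ - (q : ℤ) * p₁ = e) (hee : e * e = 1)
    (h1 : x ^ q₁ * s ^ q = x' ^ q₁ * s' ^ q)
    (h2 : x ^ p₁ * s ^ p = x' ^ p₁ * s' ^ p) : x = x' ∧ s = s' := by
  have hu : x / x' ≠ 0 := div_ne_zero hx hx'
  have hw : s / s' ≠ 0 := div_ne_zero hs hs'
  have h1' : (x / x') ^ q₁ * (s / s') ^ q = 1 := by
    rw [div_pow, div_pow, div_mul_div_comm, h1,
      div_self (mul_ne_zero (pow_ne_zero _ hx') (pow_ne_zero _ hs'))]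
  have h2' : (x / x') ^ p₁ * (s / s') ^ p = 1 := by
    rw [div_pow, div_pow, div_mul_div_comm, h2,
      div_self (mul_ne_zero (pow_ne_zero _ hx') (pow_ne_zero _ hs'))]
  have h1z : (x / x') ^ (q₁ : ℤ) * (s / s') ^ (q : ℤ) = 1 := by
    rw [zpow_natCast, zpow_natCast]; exact h1'
  have h2z : (x / x') ^ (p₁ : ℤ) * (s / s') ^ (p : ℤ) = 1 := by
    rw [zpow_natCast, zpow_natCast]; exact h2'
  have key0 := combo hu hw (q₁ : ℤ) (q : ℤ) (p₁ : ℤ) (p : ℤ) (p : ℤ) (-(q : ℤ))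
  rw [h1z, h2z, one_zpow, one_zpow, one_mul,
    show ((q₁ : ℤ) * p + (p₁ : ℤ) * (-(q : ℤ))) = e by rw [← he]; ring,
    show ((q : ℤ) * p + (p : ℤ) * (-(q : ℤ))) = 0 by ring, zpow_zero, mul_one] at key0
  -- key0 : 1 = (x/x') ^ e
  have hu1 : x / x' = 1 := by
    calc x / x' = ((x / x') ^ e) ^ e := by rw [← zpow_mul, hee, zpow_one]
    _ = 1 := by rw [← key0, one_zpow]
  have hxx : x = x' := by rwa [div_eq_one_iff_eq hx'] at hu1
  rw [hu1, one_pow, one_mul] at h1' h2'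
  have hwq : (s / s') ^ (q : ℤ) = 1 := by rw [zpow_natCast]; exact h1'
  have hwp : (s / s') ^ (p : ℤ) = 1 := by rw [zpow_natCast]; exact h2'
  have we : (s / s') ^ e = 1 := by
    rw [← he, zpow_sub₀ hw, zpow_mul, zpow_mul, hwp, hwq, one_zpow, one_zpow, div_one]
  have hw1 : s / s' = 1 := by
    calc s / s' = ((s / s') ^ e) ^ e := by rw [← zpow_mul, hee, zpow_one]
    _ = 1 := by rw [we, one_zpow]
  exact ⟨hxx, by rwa [div_eq_one_iff_eq hs'] at hw1⟩

private lemma solve {z c : ℂ} (hz : z ≠ 0) (hc : c ≠ 0)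
    (p q p₁ q₁ : ℕ) {e : ℤ} (he : (p : ℤ) * q₁ - (q : ℤ) * p₁ = e) (hee : e * e = 1) :
    ∃ x s : ℂ, x ≠ 0 ∧ s ≠ 0 ∧ x ^ q₁ * s ^ q = z ∧ x ^ p₁ * s ^ p = c := by
  refine ⟨z ^ (e * p) * c ^ (-(e * q)), z ^ (-(e * p₁)) * c ^ (e * q₁),
    mul_ne_zero (zpow_ne_zero _ hz) (zpow_ne_zero _ hc),
    mul_ne_zero (zpow_ne_zero _ hz) (zpow_ne_zero _ hc), ?_, ?_⟩
  · rw [← zpow_natCast (z ^ (e * p) * c ^ (-(e * q))) q₁,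
      ← zpow_natCast (z ^ (-(e * p₁)) * c ^ (e * q₁)) q, combo hz hc,
      show (e * p) * (q₁ : ℤ) + (-(e * p₁)) * (q : ℤ) = 1 by rw [← hee]; linear_combination e * he,
      show (-(e * (q : ℤ))) * (q₁ : ℤ) + (e * q₁) * (q : ℤ) = 0 by ring,
      zpow_one, zpow_zero, mul_one]
  · rw [← zpow_natCast (z ^ (e * p) * c ^ (-(e * q))) p₁,
      ← zpow_natCast (z ^ (-(e * p₁)) * c ^ (e * q₁)) p, combo hz hc,
      show (e * p) * (p₁ : ℤ) + (-(e * p₁)) * (p : ℤ) = 0 by ring,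
      show (-(e * (q : ℤ))) * (p₁ : ℤ) + (e * q₁) * (p : ℤ) = 1 by rw [← hee]; linear_combination e * he,
      zpow_zero, zpow_one, one_mul]

/-- For `t ≠ 0` with `t ≠ f₂(0,y)` for all `y`, the map `g` is a bijection
from the fibre `f₂⁻¹(t)` onto `ℂ ∖ ({0} ∪ {β₁, …, β_{r−1}})`. The target does not
depend on `t`, so all such fibres are identified with the same `r`-punctured plane;
in particular `f₂` is an isotrivial rational polynomial. -/
theorem stmt5 (k : ℕ) (hk : 1 ≤ k) (P : Polynomial ℂ) (hP : P.degree < (k : WithBot ℕ))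
    (p q p₁ q₁ : ℕ) (hq₁ : q₁ < q) (hp₁ : p₁ < p)
    (huni : (p : ℤ) * q₁ - (q : ℤ) * p₁ = 1 ∨ (p : ℤ) * q₁ - (q : ℤ) * p₁ = -1)
    (r : ℕ) (hr : 1 ≤ r)
    (a : Fin (r - 1) → ℕ) (ha : ∀ i, 0 < a i)
    (β : Fin (r - 1) → ℂ) (hβinj : Function.Injective β) (hβ0 : ∀ i, β i ≠ 0)
    (t : ℂ) (ht0 : t ≠ 0)
    (htf : ∀ y : ℂ, t ≠ f2Fun k p q p₁ q₁ r P a β (0, y)) :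
    Set.BijOn (gFun k q q₁ P)
      {v : ℂ × ℂ | f2Fun k p q p₁ q₁ r P a β v = t}
      {z : ℂ | z ≠ 0 ∧ ∀ i, z ≠ β i} := by
  obtain ⟨e, he, hee⟩ : ∃ e : ℤ, (p : ℤ) * q₁ - (q : ℤ) * p₁ = e ∧ e * e = 1 := by
    rcases huni with h | h
    exacts [⟨1, h, by norm_num⟩, ⟨-1, h, by norm_num⟩]
  have hpne : p ≠ 0 := by omega
  -- facts about points on the fibre
  have facts : ∀ v : ℂ × ℂ, f2Fun k p q p₁ q₁ r P a β v = t →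
      v.1 ≠ 0 ∧ sFun k P v ≠ 0 ∧ ∀ i, β i - gFun k q q₁ P v ≠ 0 := by
    intro v hv
    have hx : v.1 ≠ 0 := by
      intro h0
      exact htf v.2 (by rw [← hv]; congr 1; exact Prod.ext h0 rfl)
    have hs : sFun k P v ≠ 0 := by
      intro h0
      apply ht0
      rw [← hv]
      simp [f2Fun, h0, zero_pow hpne]
    refine ⟨hx, hs, fun i h0 => ?_⟩
    apply ht0
    rw [← hv, f2Fun, Finset.prod_eq_zero (Finset.mem_univ i)
      (by rw [h0]; exact zero_pow (ha i).ne'), mul_zero]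
  constructor
  · -- MapsTo
    intro v hv
    obtain ⟨hx, hs, hβg⟩ := facts v hv
    refine ⟨mul_ne_zero (pow_ne_zero _ hx) (pow_ne_zero _ hs), fun i h0 => hβg i ?_⟩
    rw [← h0, sub_self]
  constructor
  · -- InjOn
    intro v hv v' hv' hg
    obtain ⟨hx, hs, hβg⟩ := facts v hv
    obtain ⟨hx', hs', hβg'⟩ := facts v' hv'
    have hPi : (∏ i, (β i - gFun k q q₁ P v') ^ a i) ≠ 0 :=
      Finset.prod_ne_zero_iff.2 fun i _ => pow_ne_zero _ (hβg' i)
    have h2 : v.1 ^ p₁ * (sFun k P v) ^ p = v'.1 ^ p₁ * (sFun k P v') ^ p := by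
      have := hv.trans hv'.symm
      rw [f2Fun, f2Fun, hg] at this
      exact mul_right_cancel₀ hPi this
    have h1 : v.1 ^ q₁ * (sFun k P v) ^ q = v'.1 ^ q₁ * (sFun k P v') ^ q := hg
    obtain ⟨hxx, hss⟩ := uniq hx hx' hs hs' he hee h1 h2
    have hy : v.2 = v'.2 := by
      rw [sFun, sFun, hxx] at hss
      have := add_right_cancel hss
      exact mul_right_cancel₀ (pow_ne_zero _ hx') this
    exact Prod.ext hxx hy
  · -- SurjOn
    intro z hz
    obtain ⟨hz0, hzβ⟩ := hz
    have hPi : (∏ i, (β i - z) ^ a i) ≠ 0 :=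
      Finset.prod_ne_zero_iff.2 fun i _ =>
        pow_ne_zero _ (sub_ne_zero_of_ne fun h => hzβ i h.symm)
    have hc : t / (∏ i, (β i - z) ^ a i) ≠ 0 := div_ne_zero ht0 hPi
    obtain ⟨x, s, hx, hs, h1, h2⟩ := solve hz0 hc p q p₁ q₁ he hee
    refine ⟨(x, (s - P.eval x) / x ^ k), ?_, ?_⟩
    · have hsv : sFun k P (x, (s - P.eval x) / x ^ k) = s := by
        rw [sFun]
        simp only
        rw [div_mul_cancel₀ _ (pow_ne_zero k hx), sub_add_cancel]
      have hgv : gFun k q q₁ P (x, (s - P.eval x) / x ^ k) = z := by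
        rw [gFun, hsv]; exact h1
      show f2Fun k p q p₁ q₁ r P a β _ = t
      rw [f2Fun, hgv]
      simp only
      rw [hsv, h2, div_mul_cancel₀ _ hPi]
    · rw [gFun]
      simp only
      rw [show sFun k P (x, (s - P.eval x) / x ^ k) = s by
        rw [sFun]; simp only; rw [div_mul_cancel₀ _ (pow_ne_zero k hx), sub_add_cancel]]
      exact h1
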